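/- Theorem (global optimality of stationary points under QI sparsity): let S ∈ {0,1}^{mN×pN} be a binary matrix such that Sparse(S) is quadratically invariant with respect to G and K·G is nilpotent for every K ∈ Sparse(S). If K* ∈ Sparse(S) is a stationary point of J, i.e. ∇J(K*) ∈ Sparse(S)^⊥, then K* is a global minimizer: J(K*) ≤ J(K) for all K ∈ Sparse(S). -/

import Mathlib

open Matrix

noncomputable section

/-- Squared Frobenius norm of a real matrix. -/
def frobSq {a b : Type*} [Fintype a] [Fintype b] (A : Matrix a b ℝ) : ℝ :=
  ∑ i, ∑ j, (A i j) ^ 2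

/-- Squared Euclidean norm of a real vector. -/
def vecSq {a : Type*} [Fintype a] (v : a → ℝ) : ℝ :=
  ∑ i, (v i) ^ 2

/-- The finite-horizon LQG cost `J(K)` of the paper, written in terms of the
square roots `Msq = M^{1/2}`, `Swsq = Σw^{1/2}`, `Rsq = R^{1/2}`, `Svsq = Σv^{1/2}`. -/
def Jcost {nn mm pp : ℕ}
    (P11 : Matrix (Fin nn) (Fin nn) ℝ) (P12 : Matrix (Fin nn) (Fin mm) ℝ)
    (C : Matrix (Fin pp) (Fin nn) ℝ)
    (Msq Swsq : Matrix (Fin nn) (Fin nn) ℝ)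
    (Rsq : Matrix (Fin mm) (Fin mm) ℝ) (Svsq : Matrix (Fin pp) (Fin pp) ℝ)
    (μ : Fin nn → ℝ) (K : Matrix (Fin mm) (Fin pp) ℝ) : ℝ :=
  frobSq (Msq * (1 - P12 * K * C)⁻¹ * P11 * Swsq)
  + frobSq (Msq * P12 * K * (1 - C * P12 * K)⁻¹ * Svsq)
  + frobSq (Rsq * K * (1 - C * P12 * K)⁻¹ * C * P11 * Swsq)
  + frobSq (Rsq * K * (1 - C * P12 * K)⁻¹ * Svsq)
  + vecSq ((Msq * (1 - P12 * K * C)⁻¹ * P11).mulVec μ)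
  + vecSq ((Rsq * K * (1 - C * P12 * K)⁻¹ * C * P11).mulVec μ)

/-- The disturbance-feedback cost `J̃(Q)` of the paper, written in terms of the
square roots `Msq = M^{1/2}`, `Swsq = Σw^{1/2}`, `Rsq = R^{1/2}`, `Svsq = Σv^{1/2}`. -/
def Jtilde {nn mm pp : ℕ}
    (P11 : Matrix (Fin nn) (Fin nn) ℝ) (P12 : Matrix (Fin nn) (Fin mm) ℝ)
    (C : Matrix (Fin pp) (Fin nn) ℝ)
    (Msq Swsq : Matrix (Fin nn) (Fin nn) ℝ)
    (Rsq : Matrix (Fin mm) (Fin mm) ℝ) (Svsq : Matrix (Fin pp) (Fin pp) ℝ)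
    (μ : Fin nn → ℝ) (Q : Matrix (Fin mm) (Fin pp) ℝ) : ℝ :=
  frobSq (Msq * (1 + P12 * Q * C) * P11 * Swsq)
  + frobSq (Msq * P12 * Q * Svsq)
  + frobSq (Rsq * Q * C * P11 * Swsq)
  + frobSq (Rsq * Q * Svsq)
  + vecSq ((Rsq * Q * C * P11).mulVec μ)
  + vecSq ((Msq * (1 + P12 * Q * C) * P11).mulVec μ)

end

/-- The positive semidefinite square root of a positive semidefinite matrix
(as defined in Mathlib of December 2024, since removed). -/
noncomputable def Matrix.PosSemidef.sqrt {n : Type*} [Fintype n] [DecidableEq n]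
    {A : Matrix n n ℝ} (hA : A.PosSemidef) : Matrix n n ℝ :=
  hA.1.eigenvectorUnitary.1 * diagonal ((↑) ∘ (√·) ∘ hA.1.eigenvalues) *
  (star hA.1.eigenvectorUnitary : Matrix n n ℝ)

/-- The sparsity subspace `Sparse(S)` associated with a binary matrix `S`. -/
def SparseSet {a b : Type*} (S : Matrix a b Bool) : Set (Matrix a b ℝ) :=
  {K | ∀ i j, S i j = false → K i j = 0}

/-!
The Youla change of variables `Q = K (1 - G K)⁻¹` maps `Sparse(S)` onto itself, with inverse
`Q ↦ Q (1 + G Q)⁻¹`: by nilpotency the Neumann series of `(1 - G K)⁻¹` is finite, and by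
quadratic invariance every term `K (G K)ⁱ` is sparse. It turns `J` into the cost `J̃`, which is
a convex quadratic function of `Q`. Given a competitor `K`, follow the curve in `Sparse(S)` whose
Youla parameter runs along the segment from `Q(K*)` to `Q(K)`. Along it `J` is a convex quadratic
polynomial in `t`; its derivative at `t = 0` vanishes because `K*` is stationary and the velocity
of the curve lies in the closed subspace `Sparse(S)`. Hence `J(K) ≥ J(K*)`.
-/

section NilpotentNeumann

variable {R : Type*} [CommRing R] {a b : Type*} [Fintype a] [Fintype b] [DecidableEq a]
  [DecidableEq b]

theorem Matrix.pow_succ_mul_comm (X : Matrix a b R) (Y : Matrix b a R) (r : ℕ) :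
    (Y * X) ^ (r + 1) = Y * (X * Y) ^ r * X := by
  induction r with
  | zero => simp
  | succ r ih => rw [pow_succ, ih, pow_succ]; simp only [Matrix.mul_assoc]

theorem Matrix.isNilpotent_mul_comm {X : Matrix a b R} {Y : Matrix b a R}
    (h : IsNilpotent (X * Y)) : IsNilpotent (Y * X) := by
  obtain ⟨r, hr⟩ := h
  exact ⟨r + 1, by rw [pow_succ_mul_comm, hr, Matrix.mul_zero, Matrix.zero_mul]⟩

theorem Matrix.inv_one_sub_eq_geom_sum {X : Matrix a a R} {r : ℕ} (h : X ^ r = 0) :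
    (1 - X)⁻¹ = ∑ i ∈ Finset.range r, X ^ i := by
  apply inv_eq_right_inv
  rw [← neg_sub, neg_mul, mul_geom_sum, h, zero_sub, neg_neg]

end NilpotentNeumann

section Youla

variable {R : Type*} [CommRing R] {a b : Type*} [Fintype a] [Fintype b] [DecidableEq b]

/-- The Youla parameter `Q` of the feedback gain `K`, in which the cost becomes `Jtilde`. -/
noncomputable def youla (G : Matrix b a R) (K : Matrix a b R) : Matrix a b R :=
  K * (1 - G * K)⁻¹

noncomputable def youlaInv (G : Matrix b a R) (Q : Matrix a b R) : Matrix a b R :=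
  Q * (1 + G * Q)⁻¹

variable {G : Matrix b a R}

theorem youlaInv_eq_neg_youla_neg (Q : Matrix a b R) : youlaInv G Q = -youla G (-Q) := by
  rw [youlaInv, youla, Matrix.mul_neg, sub_neg_eq_add, Matrix.neg_mul, neg_neg]

theorem one_add_mul_youla {K : Matrix a b R} (hK : IsUnit (1 - G * K)) :
    1 + G * youla G K = (1 - G * K)⁻¹ := by
  have hdet := (isUnit_iff_isUnit_det _).mp hK
  calc 1 + G * youla G K = ((1 - G * K) + G * K) * (1 - G * K)⁻¹ := by
        rw [Matrix.add_mul, mul_nonsing_inv _ hdet, youla, Matrix.mul_assoc]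
    _ = (1 - G * K)⁻¹ := by rw [sub_add_cancel, Matrix.one_mul]

theorem youla_neg_youla {K : Matrix a b R} (hK : IsUnit (1 - G * K)) :
    youla G (-youla G K) = -K := by
  have hdet := (isUnit_iff_isUnit_det _).mp hK
  rw [youla, Matrix.mul_neg, sub_neg_eq_add, one_add_mul_youla hK, nonsing_inv_nonsing_inv _ hdet,
    youla, Matrix.neg_mul, nonsing_inv_mul_cancel_right _ _ hdet]

theorem youlaInv_youla {K : Matrix a b R} (hK : IsUnit (1 - G * K)) :
    youlaInv G (youla G K) = K := by
  rw [youlaInv_eq_neg_youla_neg, youla_neg_youla hK, neg_neg]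

theorem youla_youlaInv {Q : Matrix a b R} (hQ : IsUnit (1 + G * Q)) :
    youla G (youlaInv G Q) = Q := by
  rw [youlaInv_eq_neg_youla_neg, youla_neg_youla (by rwa [Matrix.mul_neg, sub_neg_eq_add]),
    neg_neg]

theorem inv_one_sub_mul_mul {w : Type*} [Fintype w] [DecidableEq w] (A : Matrix w a R)
    (K : Matrix a b R) (B : Matrix b w R) (hK : IsUnit (1 - B * A * K)) :
    (1 - A * K * B)⁻¹ = 1 + A * youla (B * A) K * B := by
  have hdet := (isUnit_iff_isUnit_det _).mp hK
  have hfix : youla (B * A) K - K * (B * A) * youla (B * A) K = K := by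
    calc _ = K * ((1 - B * A * K) * (1 - B * A * K)⁻¹) := by
          simp only [youla, Matrix.mul_sub, Matrix.sub_mul, Matrix.one_mul, Matrix.mul_assoc]
      _ = K := by rw [mul_nonsing_inv _ hdet, Matrix.mul_one]
  apply inv_eq_right_inv
  calc (1 - A * K * B) * (1 + A * youla (B * A) K * B)
      = 1 + A * (youla (B * A) K - K * (B * A) * youla (B * A) K - K) * B := by
        simp only [Matrix.mul_sub, Matrix.sub_mul, Matrix.mul_add, Matrix.mul_one,
          Matrix.one_mul, Matrix.mul_assoc]
        abel
    _ = 1 := by rw [hfix, sub_self, Matrix.mul_zero, Matrix.zero_mul, add_zero]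

end Youla

section Sparsity

variable {a b : Type*} [Fintype a] [Fintype b]

def sparseSubmodule (S : Matrix a b Bool) : Submodule ℝ (Matrix a b ℝ) where
  carrier := SparseSet S
  add_mem' hK hL i j h := by simp [hK i j h, hL i j h]
  zero_mem' _ _ _ := rfl
  smul_mem' c K hK i j h := by simp [hK i j h]

variable [DecidableEq a] [DecidableEq b] {S : Matrix a b Bool} {G : Matrix b a ℝ}

-- Test quadratic invariance on `Eᵢₖ + Eₗⱼ`.
theorem entry_eq_zero_of_QI (hQI : ∀ K ∈ SparseSet S, K * G * K ∈ SparseSet S) {i : a} {j : b}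
    {k : b} {l : a} (hij : S i j = false) (hik : S i k = true) (hlj : S l j = true) :
    G k l = 0 := by
  have hkj : k ≠ j := by rintro rfl; simp_all
  have hli : l ≠ i := by rintro rfl; simp_all
  have hK : single i k 1 + single l j 1 ∈ SparseSet S := by
    intro x y hxy
    have h₁ : ¬(i = x ∧ k = y) := by rintro ⟨rfl, rfl⟩; simp_all
    have h₂ : ¬(l = x ∧ j = y) := by rintro ⟨rfl, rfl⟩; simp_all
    simp [h₁, h₂]
  simpa [Matrix.add_mul, Matrix.mul_add, single_apply_of_col_ne _ _ hkj,
    single_apply_of_row_ne hli] using hQI _ hK i j hij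

theorem mul_mul_mem_of_QI (hQI : ∀ K ∈ SparseSet S, K * G * K ∈ SparseSet S)
    {K₁ K₂ : Matrix a b ℝ} (h₁ : K₁ ∈ SparseSet S) (h₂ : K₂ ∈ SparseSet S) :
    K₁ * G * K₂ ∈ SparseSet S := by
  intro i j hij
  simp only [mul_apply, Finset.sum_mul]
  refine Finset.sum_eq_zero fun l _ => Finset.sum_eq_zero fun k _ => ?_
  cases hik : S i k
  · simp [h₁ i k hik]
  cases hlj : S l j
  · simp [h₂ l j hlj]
  simp [entry_eq_zero_of_QI hQI hij hik hlj]

theorem youla_mem_of_QI (hQI : ∀ K ∈ SparseSet S, K * G * K ∈ SparseSet S)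
    (hnil : ∀ K ∈ SparseSet S, IsNilpotent (K * G)) {K : Matrix a b ℝ}
    (hK : K ∈ SparseSet S) :
    youla G K ∈ SparseSet S := by
  have hpow : ∀ i : ℕ, K * (G * K) ^ i ∈ SparseSet S := by
    intro i
    induction i with
    | zero => simpa using hK
    | succ i ih =>
      rw [pow_succ, ← Matrix.mul_assoc, ← Matrix.mul_assoc]
      exact mul_mul_mem_of_QI hQI ih hK
  obtain ⟨r, hr⟩ := isNilpotent_mul_comm (hnil K hK)
  rw [youla, inv_one_sub_eq_geom_sum hr, Matrix.mul_sum]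
  exact (sparseSubmodule S).sum_mem fun i _ => hpow i

theorem youlaInv_mem_of_QI (hQI : ∀ K ∈ SparseSet S, K * G * K ∈ SparseSet S)
    (hnil : ∀ K ∈ SparseSet S, IsNilpotent (K * G)) {Q : Matrix a b ℝ}
    (hQ : Q ∈ SparseSet S) :
    youlaInv G Q ∈ SparseSet S := by
  rw [youlaInv_eq_neg_youla_neg]
  exact (sparseSubmodule S).neg_mem (youla_mem_of_QI hQI hnil ((sparseSubmodule S).neg_mem hQ))

end Sparsity

theorem Jcost_eq_Jtilde_youla {nn mm pp : ℕ}
    {P11 : Matrix (Fin nn) (Fin nn) ℝ} {P12 : Matrix (Fin nn) (Fin mm) ℝ}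
    {C : Matrix (Fin pp) (Fin nn) ℝ} {Msq Swsq : Matrix (Fin nn) (Fin nn) ℝ}
    {Rsq : Matrix (Fin mm) (Fin mm) ℝ} {Svsq : Matrix (Fin pp) (Fin pp) ℝ}
    {μ : Fin nn → ℝ} {K : Matrix (Fin mm) (Fin pp) ℝ} (hK : IsUnit (1 - C * P12 * K)) :
    Jcost P11 P12 C Msq Swsq Rsq Svsq μ K
      = Jtilde P11 P12 C Msq Swsq Rsq Svsq μ (youla (C * P12) K) := by
  rw [Jcost, Jtilde, inv_one_sub_mul_mul P12 K C hK]
  simp only [youla, Matrix.mul_assoc]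
  ring

def IsConvexQuadratic (φ : ℝ → ℝ) : Prop :=
  ∃ b c : ℝ, 0 ≤ c ∧ ∀ t, φ t = φ 0 + b * t + c * t ^ 2

namespace IsConvexQuadratic

theorem const (x : ℝ) : IsConvexQuadratic fun _ => x :=
  ⟨0, 0, le_rfl, fun _ => by ring⟩

theorem sq_add_mul (x y : ℝ) : IsConvexQuadratic fun t => (x + t * y) ^ 2 :=
  ⟨2 * x * y, y ^ 2, sq_nonneg y, fun _ => by ring⟩

theorem add {φ ψ : ℝ → ℝ} (hφ : IsConvexQuadratic φ) (hψ : IsConvexQuadratic ψ) :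
    IsConvexQuadratic fun t => φ t + ψ t := by
  obtain ⟨b, c, hc, hφ⟩ := hφ
  obtain ⟨b', c', hc', hψ⟩ := hψ
  exact ⟨b + b', c + c', add_nonneg hc hc', fun t => by dsimp only; rw [hφ t, hψ t]; ring⟩

theorem sum {ι : Type*} (s : Finset ι) {φ : ι → ℝ → ℝ}
    (h : ∀ i ∈ s, IsConvexQuadratic (φ i)) :
    IsConvexQuadratic fun t => ∑ i ∈ s, φ i t := by
  induction s using Finset.cons_induction with
  | empty => simpa using const 0
  | cons i s hi ih =>
    simp only [Finset.sum_cons]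
    exact (h i (s.mem_cons_self i)).add (ih fun j hj => h j (Finset.mem_cons_of_mem hj))

theorem le_of_hasDerivAt_zero {φ : ℝ → ℝ} (hφ : IsConvexQuadratic φ)
    (hderiv : HasDerivAt φ 0 0) (t : ℝ) : φ 0 ≤ φ t := by
  obtain ⟨b, c, hc, hφ⟩ := hφ
  have hb : HasDerivAt φ b 0 := by
    rw [funext hφ]
    simpa using (((hasDerivAt_id 0).const_mul b).const_add (φ 0)).fun_add
      ((hasDerivAt_pow 2 0).const_mul c)
  rw [hφ t, hb.unique hderiv]
  nlinarith [sq_nonneg t]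

end IsConvexQuadratic

theorem isConvexQuadratic_frobSq {a b : Type*} [Fintype a] [Fintype b] (A B : Matrix a b ℝ) :
    IsConvexQuadratic fun t => frobSq (A + t • B) :=
  .sum _ fun i _ => .sum _ fun j _ => .sq_add_mul (A i j) (B i j)

theorem isConvexQuadratic_vecSq {a : Type*} [Fintype a] (v w : a → ℝ) :
    IsConvexQuadratic fun t => vecSq (v + t • w) :=
  .sum _ fun i _ => .sq_add_mul (v i) (w i)

theorem isConvexQuadratic_Jtilde {nn mm pp : ℕ}
    (P11 : Matrix (Fin nn) (Fin nn) ℝ) (P12 : Matrix (Fin nn) (Fin mm) ℝ)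
    (C : Matrix (Fin pp) (Fin nn) ℝ) (Msq Swsq : Matrix (Fin nn) (Fin nn) ℝ)
    (Rsq : Matrix (Fin mm) (Fin mm) ℝ) (Svsq : Matrix (Fin pp) (Fin pp) ℝ)
    (μ : Fin nn → ℝ) (Q E : Matrix (Fin mm) (Fin pp) ℝ) :
    IsConvexQuadratic fun t => Jtilde P11 P12 C Msq Swsq Rsq Svsq μ (Q + t • E) := by
  -- distributing turns every term of `Jtilde` into a `frobSq` or `vecSq` of some `A + t • B`
  simp only [Jtilde, Matrix.mul_add, Matrix.add_mul, Matrix.mul_smul, Matrix.smul_mul,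
    Matrix.add_mulVec, Matrix.smul_mulVec, ← add_assoc]
  exact ((((((isConvexQuadratic_frobSq _ _).add (isConvexQuadratic_frobSq _ _)).add
    (isConvexQuadratic_frobSq _ _)).add (isConvexQuadratic_frobSq _ _)).add
    (isConvexQuadratic_vecSq _ _)).add (isConvexQuadratic_vecSq _ _))

theorem Submodule.hasDerivAt_mem {E : Type*} [NormedAddCommGroup E] [NormedSpace ℝ E]
    {V : Submodule ℝ E} (hV : IsClosed (V : Set E)) {c : ℝ → E} {c' : E} {t : ℝ}
    (hc : HasDerivAt c c' t) (hcV : ∀ s, c s ∈ V) : c' ∈ V :=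
  hV.mem_of_tendsto (hasDerivAt_iff_tendsto_slope.mp hc) <|
    Filter.Eventually.of_forall fun s => V.smul_mem _ (V.sub_mem (hcV s) (hcV t))

theorem hasDerivAt_comp_zero_of_lineDeriv_eq_zero {E : Type*} [NormedAddCommGroup E]
    [NormedSpace ℝ E] {V : Submodule ℝ E} (hV : IsClosed (V : Set E)) {f : E → ℝ} {x : E}
    (hf : DifferentiableAt ℝ f x) (hstat : ∀ v ∈ V, lineDeriv ℝ f x v = 0) {c : ℝ → E}
    (hc : DifferentiableAt ℝ c 0) (hc0 : c 0 = x) (hcV : ∀ t, c t ∈ V) :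
    HasDerivAt (fun t => f (c t)) 0 0 := by
  subst hc0
  have hchain := hf.hasFDerivAt.comp_hasDerivAt 0 hc.hasDerivAt
  rwa [← hf.lineDeriv_eq_fderiv, hstat _ (V.hasDerivAt_mem hV hc.hasDerivAt hcV)] at hchain

-- Any norm would do in finite dimension; this one makes square matrices a normed algebra.
attribute [local instance] Matrix.linftyOpNormedAddCommGroup Matrix.linftyOpNormedSpace
  Matrix.linftyOpNormedRing Matrix.linftyOpNormedAlgebra

section MatrixCalculus

variable {u v w : Type*} [Fintype u] [Fintype v] [Fintype w]
  {X : Type*} [NormedAddCommGroup X] [NormedSpace ℝ X] {x : X}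

@[fun_prop]
theorem DifferentiableAt.matrix_mul {f : X → Matrix u v ℝ} {g : X → Matrix v w ℝ}
    (hf : DifferentiableAt ℝ f x) (hg : DifferentiableAt ℝ g x) :
    DifferentiableAt ℝ (fun y => f y * g y) x := by
  have hmul : IsBoundedBilinearMap ℝ fun p : Matrix u v ℝ × Matrix v w ℝ => p.1 * p.2 :=
    { add_left := Matrix.add_mul
      smul_left := Matrix.smul_mul
      add_right := Matrix.mul_add
      smul_right := fun c A B => Matrix.mul_smul A c B
      bound := ⟨1, one_pos, fun A B => by rw [one_mul]; exact linfty_opNorm_mul A B⟩ }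
  exact (hmul.differentiableAt (f x, g x)).comp x (hf.prodMk hg)

@[fun_prop]
theorem DifferentiableAt.matrix_inv [DecidableEq u] {f : X → Matrix u u ℝ}
    (hf : DifferentiableAt ℝ f x) (hx : IsUnit (f x)) :
    DifferentiableAt ℝ (fun y => (f y)⁻¹) x := by
  simp_rw [nonsing_inv_eq_ringInverse]
  exact hf.inverse hx

@[fun_prop]
theorem DifferentiableAt.mulVec {f : X → Matrix u v ℝ} (μ : v → ℝ)
    (hf : DifferentiableAt ℝ f x) : DifferentiableAt ℝ (fun y => (f y).mulVec μ) x := by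
  unfold Matrix.mulVec dotProduct
  fun_prop

@[fun_prop]
theorem DifferentiableAt.frobSq {f : X → Matrix u v ℝ} (hf : DifferentiableAt ℝ f x) :
    DifferentiableAt ℝ (fun y => frobSq (f y)) x := by
  unfold _root_.frobSq
  fun_prop

@[fun_prop]
theorem DifferentiableAt.vecSq {f : X → u → ℝ} (hf : DifferentiableAt ℝ f x) :
    DifferentiableAt ℝ (fun y => vecSq (f y)) x := by
  unfold _root_.vecSq
  fun_prop

theorem differentiableAt_Jcost {nn mm pp : ℕ}
    {P11 : Matrix (Fin nn) (Fin nn) ℝ} {P12 : Matrix (Fin nn) (Fin mm) ℝ}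
    {C : Matrix (Fin pp) (Fin nn) ℝ} {Msq Swsq : Matrix (Fin nn) (Fin nn) ℝ}
    {Rsq : Matrix (Fin mm) (Fin mm) ℝ} {Svsq : Matrix (Fin pp) (Fin pp) ℝ}
    {μ : Fin nn → ℝ} {K : Matrix (Fin mm) (Fin pp) ℝ} (hK : IsUnit (1 - C * P12 * K)) :
    DifferentiableAt ℝ (Jcost P11 P12 C Msq Swsq Rsq Svsq μ) K := by
  have hK' : IsUnit (1 - P12 * K * C) := by
    rwa [isUnit_iff_isUnit_det, det_one_sub_mul_comm, ← Matrix.mul_assoc,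
      ← isUnit_iff_isUnit_det]
  unfold Jcost
  fun_prop (disch := assumption)

theorem differentiableAt_youlaInv_line {a b : Type*} [Fintype a] [Fintype b] [DecidableEq b]
    {G : Matrix b a ℝ} {Q E : Matrix a b ℝ} (hQ : IsUnit (1 + G * Q)) :
    DifferentiableAt ℝ (fun t : ℝ => youlaInv G (Q + t • E)) 0 := by
  unfold youlaInv
  fun_prop (disch := simpa using hQ)

end MatrixCalculus

theorem stationary_implies_global_opt_QI_general {n m p N : ℕ}
    (P11 : Matrix (Fin (n * (N + 1))) (Fin (n * (N + 1))) ℝ)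
    (P12 : Matrix (Fin (n * (N + 1))) (Fin (m * N)) ℝ)
    (C : Matrix (Fin (p * N)) (Fin (n * (N + 1))) ℝ)
    {M W : Matrix (Fin (n * (N + 1))) (Fin (n * (N + 1))) ℝ}
    {R : Matrix (Fin (m * N)) (Fin (m * N)) ℝ}
    {V : Matrix (Fin (p * N)) (Fin (p * N)) ℝ}
    (hM : M.PosSemidef) (hW : W.PosSemidef) (hR : R.PosDef) (hV : V.PosDef)
    (μ : Fin (n * (N + 1)) → ℝ)
    (G : Matrix (Fin (p * N)) (Fin (m * N)) ℝ) (hG : G = C * P12)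
    (S : Matrix (Fin (m * N)) (Fin (p * N)) Bool)
    (hQI : ∀ K ∈ SparseSet S, K * G * K ∈ SparseSet S)
    (hnilp : ∀ K ∈ SparseSet S, IsNilpotent (K * G))
    (Kstar : Matrix (Fin (m * N)) (Fin (p * N)) ℝ) (hKstar : Kstar ∈ SparseSet S)
    (hstat : ∀ D ∈ SparseSet S, deriv (fun t : ℝ =>
        Jcost P11 P12 C hM.sqrt hW.sqrt hR.posSemidef.sqrt hV.posSemidef.sqrt μ
          (Kstar + t • D)) 0 = 0) :
    ∀ K ∈ SparseSet S,
      Jcost P11 P12 C hM.sqrt hW.sqrt hR.posSemidef.sqrt hV.posSemidef.sqrt μ Kstar ≤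
      Jcost P11 P12 C hM.sqrt hW.sqrt hR.posSemidef.sqrt hV.posSemidef.sqrt μ K := by
  intro K hK
  subst hG
  set J := Jcost P11 P12 C hM.sqrt hW.sqrt hR.posSemidef.sqrt hV.posSemidef.sqrt μ
  set J' := Jtilde P11 P12 C hM.sqrt hW.sqrt hR.posSemidef.sqrt hV.posSemidef.sqrt μ
  have hunit : ∀ K ∈ SparseSet S, IsUnit (1 - C * P12 * K) := fun K hK =>
    (isNilpotent_mul_comm (hnilp K hK)).isUnit_one_sub
  set Q₀ := youla (C * P12) Kstar
  set E := youla (C * P12) K - Q₀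
  have hQ₀ : Q₀ ∈ SparseSet S := youla_mem_of_QI hQI hnilp hKstar
  have hline : ∀ t : ℝ, Q₀ + t • E ∈ SparseSet S := fun t =>
    (sparseSubmodule S).add_mem hQ₀ <| (sparseSubmodule S).smul_mem t <|
      (sparseSubmodule S).sub_mem (youla_mem_of_QI hQI hnilp hK) hQ₀
  set c := fun t : ℝ => youlaInv (C * P12) (Q₀ + t • E)
  have hc : ∀ t, c t ∈ SparseSet S := fun t => youlaInv_mem_of_QI hQI hnilp (hline t)
  have hJc : (fun t => J (c t)) = fun t => J' (Q₀ + t • E) := funext fun t =>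
    (Jcost_eq_Jtilde_youla (hunit _ (hc t))).trans
      (congrArg J' (youla_youlaInv (isNilpotent_mul_comm (hnilp _ (hline t))).isUnit_one_add))
  have hderiv : HasDerivAt (fun t : ℝ => J' (Q₀ + t • E)) 0 0 := by
    rw [← hJc]
    exact hasDerivAt_comp_zero_of_lineDeriv_eq_zero
      (sparseSubmodule S).closed_of_finiteDimensional
      (differentiableAt_Jcost (hunit _ hKstar)) hstat
      (differentiableAt_youlaInv_line (isNilpotent_mul_comm (hnilp _ hQ₀)).isUnit_one_add)
      (by simp [c, Q₀, youlaInv_youla (hunit _ hKstar)]) hc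
  calc J Kstar = J' (Q₀ + (0 : ℝ) • E) := by
        rw [zero_smul, add_zero]
        exact Jcost_eq_Jtilde_youla (hunit _ hKstar)
    _ ≤ J' (Q₀ + (1 : ℝ) • E) :=
        (isConvexQuadratic_Jtilde _ _ _ _ _ _ _ _ Q₀ E).le_of_hasDerivAt_zero hderiv 1
    _ = J K := by
        rw [one_smul, add_sub_cancel]
        exact (Jcost_eq_Jtilde_youla (hunit _ hK)).symm

/-- **global optimality of stationary points under QI sparsity.** If `Sparse(S)`
is quadratically invariant with respect to `G = C·P12` and `K·G` is nilpotent on `Sparse(S)`,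
then every stationary point `K* ∈ Sparse(S)` of `J` (all directional derivatives along
`Sparse(S)` vanish, i.e. `∇J(K*) ∈ Sparse(S)^⊥`) is a global minimizer of `J` over
`Sparse(S)`. -/
theorem stationary_implies_global_opt_QI {n m p N : ℕ}
    (hn : 0 < n) (hm : 0 < m) (hp : 0 < p) (hN : 0 < N)
    (P11 : Matrix (Fin (n * (N + 1))) (Fin (n * (N + 1))) ℝ)
    (P12 : Matrix (Fin (n * (N + 1))) (Fin (m * N)) ℝ)
    (C : Matrix (Fin (p * N)) (Fin (n * (N + 1))) ℝ)
    {M W : Matrix (Fin (n * (N + 1))) (Fin (n * (N + 1))) ℝ}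
    {R : Matrix (Fin (m * N)) (Fin (m * N)) ℝ}
    {V : Matrix (Fin (p * N)) (Fin (p * N)) ℝ}
    (hM : M.PosSemidef) (hW : W.PosSemidef) (hR : R.PosDef) (hV : V.PosDef)
    (μ : Fin (n * (N + 1)) → ℝ)
    (G : Matrix (Fin (p * N)) (Fin (m * N)) ℝ) (hG : G = C * P12)
    (S : Matrix (Fin (m * N)) (Fin (p * N)) Bool)
    (hQI : ∀ K ∈ SparseSet S, K * G * K ∈ SparseSet S)
    (hnilp : ∀ K ∈ SparseSet S, IsNilpotent (K * G))
    (Kstar : Matrix (Fin (m * N)) (Fin (p * N)) ℝ) (hKstar : Kstar ∈ SparseSet S)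
    (hstat : ∀ D ∈ SparseSet S, deriv (fun t : ℝ =>
        Jcost P11 P12 C hM.sqrt hW.sqrt hR.posSemidef.sqrt hV.posSemidef.sqrt μ
          (Kstar + t • D)) 0 = 0) :
    ∀ K ∈ SparseSet S,
      Jcost P11 P12 C hM.sqrt hW.sqrt hR.posSemidef.sqrt hV.posSemidef.sqrt μ Kstar ≤
      Jcost P11 P12 C hM.sqrt hW.sqrt hR.posSemidef.sqrt hV.posSemidef.sqrt μ K :=
  stationary_implies_global_opt_QI_general P11 P12 C hM hW hR hV μ G hG S hQI hnilp Kstar hKstar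
    hstat
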